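/- Consider the A-CODER iterates. If for all k ≥ 1 the step sizes satisfy a_k²/A_k ≤ 2(1 + A_{k−1}γ)/(5L), then for every u ∈ ℝ^d and every k ≥ 1: E_k(u) ≤ a_k ⟨∇f(x_k) − p_k, v_k − u⟩ − a_{k−1}⟨∇f(x_{k−1}) − p_{k−1}, v_{k−1} − u⟩ − ((1 + A_{k−1}γ)/10)‖v_k − v_{k−1}‖² + ((1 + A_{k−2}γ)/10)‖v_{k−1} − v_{k−2}‖², where E_k(u) := A_k (f(y_k) − f(x_k)) − A_{k−1}(f(y_{k−1}) − f(x_k)) − a_k ⟨q_k, v_k − x_k⟩ + a_k ⟨∇f(x_k) − q_k, x_k − u⟩ − ((1 + A_{k−1}γ)/2)‖v_k − v_{k−1}‖², and where A_{−1} := 0, v_{−1} := x_0. -/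

import Mathlib

noncomputable section
open MeasureTheory Finset Set RealInnerProductSpace

abbrev Euc (d : ℕ) := EuclideanSpace ℝ (Fin d)

def blockMask {d m : ℕ} (blk : Fin d → Fin m) (j : Fin m) (z : Euc d) : Euc d :=
  (EuclideanSpace.equiv (Fin d) ℝ).symm fun i => if blk i = j then z i else 0

def blockCombine {d m : ℕ} (blk : Fin d → Fin m) (j : ℕ) (x y : Euc d) : Euc d :=
  (EuclideanSpace.equiv (Fin d) ℝ).symm fun i => if (blk i : ℕ) + 1 ≤ j then x i else y i

def quadForm {d : ℕ} (Q : Matrix (Fin d) (Fin d) ℝ) (z : Euc d) : ℝ :=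
  ∑ i, ∑ i', Q i i' * z i * z i'

def keepGE {d m : ℕ} (blk : Fin d → Fin m) (j : ℕ) (Q : Matrix (Fin d) (Fin d) ℝ) :
    Matrix (Fin d) (Fin d) ℝ :=
  Matrix.of fun i i' => if j ≤ (blk i : ℕ) + 1 ∧ j ≤ (blk i' : ℕ) + 1 then Q i i' else 0

def Qtilde {d m : ℕ} (blk : Fin d → Fin m) (Q : Fin m → Matrix (Fin d) (Fin d) ℝ) :
    Matrix (Fin d) (Fin d) ℝ :=
  ∑ j : Fin m, (keepGE blk ((j : ℕ) + 1) (Q j) + keepGE blk ((j : ℕ) + 2) (Q j))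

def specNorm {d : ℕ} (Q : Matrix (Fin d) (Fin d) ℝ) : ℝ :=
  ‖Matrix.toEuclideanCLM (𝕜 := ℝ) Q‖

def bigL {d m : ℕ} (blk : Fin d → Fin m) (Q : Fin m → Matrix (Fin d) (Fin d) ℝ) : ℝ :=
  Real.sqrt (2 * specNorm (Qtilde blk Q))

def BlockLip {d m : ℕ} (blk : Fin d → Fin m) (f : Euc d → ℝ)
    (Q : Fin m → Matrix (Fin d) (Fin d) ℝ) : Prop :=
  ∀ (j : Fin m) (x y : Euc d),
    ‖blockMask blk j (gradient f x) - blockMask blk j (gradient f y)‖ ^ 2 ≤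
      quadForm (Q j) (x - y)

def SubgradStrongConvex {d : ℕ} (γ : ℝ) (g : Euc d → ℝ) : Prop :=
  ∀ x y s : Euc d, (∀ z, g x + ⟪s, z - x⟫ ≤ g z) →
    g x + ⟪s, y - x⟫ + γ / 2 * ‖y - x‖ ^ 2 ≤ g y

/-- The A-CODER iterates (Algorithm 1), encoded via their characterizing properties.
The prox step is encoded as minimization of the (block-separable) objective. -/
structure ACoder (d m : ℕ) (blk : Fin d → Fin m) (f g : Euc d → ℝ)
    (gj : Fin m → Euc d → ℝ) (Q : Fin m → Matrix (Fin d) (Fin d) ℝ) (γ : ℝ) where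
  x0 : Euc d
  a : ℕ → ℝ
  A : ℕ → ℝ
  x : ℕ → Euc d
  v : ℕ → Euc d
  y : ℕ → Euc d
  p : ℕ → Euc d
  q : ℕ → Euc d
  hmono : Monotone blk
  hsurj : Function.Surjective blk
  hpsd : ∀ j, (Q j).PosSemidef
  hLpos : 0 < bigL blk Q
  hfconv : ConvexOn ℝ Set.univ f
  hfdiff : Differentiable ℝ f
  hflip : BlockLip blk f Q
  hγ : 0 ≤ γ
  hgconv : ConvexOn ℝ Set.univ g
  hgsc : SubgradStrongConvex γ g
  hgsep : ∀ z, g z = ∑ j, gj j z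
  hgjblock : ∀ j u u', blockMask blk j u = blockMask blk j u' → gj j u = gj j u'
  hgjconv : ∀ j, ConvexOn ℝ Set.univ (gj j)
  hx0 : x 0 = x0
  hv0 : v 0 = x0
  hy0 : y 0 = x0
  hp0 : p 0 = gradient f x0
  ha0 : a 0 = 0
  hA0 : A 0 = 0
  hapos : ∀ k, 1 ≤ k → 0 < a k
  hstep : ∀ k, 1 ≤ k → a k ^ 2 / A k ≤ 2 * (1 + A (k - 1) * γ) / (5 * bigL blk Q)
  hA : ∀ k, 1 ≤ k → A k = A (k - 1) + a k
  hx : ∀ k, 1 ≤ k → x k = (A (k - 1) / A k) • y (k - 1) + (a k / A k) • v (k - 1)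
  hp : ∀ k, 1 ≤ k → ∀ j, blockMask blk j (p k) =
      blockMask blk j (gradient f (blockCombine blk ((j : ℕ) + 1) (x k) (y k)))
  hq : ∀ k, 1 ≤ k →
      q k = p k + (a (k - 1) / a k) • (gradient f (x (k - 1)) - p (k - 1))
  hv : ∀ k, 1 ≤ k → IsMinOn
      (fun u => A k * g u + ‖u - (x0 - ∑ i ∈ Finset.Icc 1 k, a i • q i)‖ ^ 2 / 2)
      Set.univ (v k)
  hy : ∀ k, 1 ≤ k → y k = (A (k - 1) / A k) • y (k - 1) + (a k / A k) • v k

/-!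
Three estimates are combined. Convexity of `f` at `x_k` bounds `A_{k-1} (f x_k - f y_{k-1})`
by `a_k ⟨∇f x_k, v_{k-1} - x_k⟩`. Changing `x` into `x + u` one block at a time, the block
Lipschitz assumption gives the descent lemma `f (x + u) ≤ f x + ⟨∇f x, u⟩ + L/2 ‖u‖²`; since
`y_k - x_k = (a_k / A_k)(v_k - v_{k-1})`, the step-size rule turns it into a bound on
`A_k (f y_k - f x_k)` with error `(1 + A_{k-1}γ)/5 ‖v_k - v_{k-1}‖²`. Finally the cyclic partial
gradient satisfies `‖∇f x_{k-1} - p_{k-1}‖ ≤ L/√2 ‖x_{k-1} - y_{k-1}‖`, and Young's inequality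
charges the extrapolation term `a_{k-1}⟨∇f x_{k-1} - p_{k-1}, v_k - v_{k-1}⟩` to
`(1 + A_{k-1}γ)/5 ‖v_k - v_{k-1}‖² + (1 + A_{k-2}γ)/10 ‖v_{k-1} - v_{k-2}‖²`. What remains is the
identity `a_k q_k = a_k p_k + a_{k-1} (∇f x_{k-1} - p_{k-1})`.
-/

variable {d m : ℕ} {blk : Fin d → Fin m}

-- The paper's `(·)_{≥t}` on vectors: with blocks numbered from `1` there, `blk i = j` means
-- `i ∈ S^(j+1)`, so `tailMask blk t` keeps `S^t, …, S^m`.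
def tailMask (blk : Fin d → Fin m) (t : ℕ) (z : Euc d) : Euc d :=
  (EuclideanSpace.equiv (Fin d) ℝ).symm fun i => if t ≤ (blk i : ℕ) + 1 then z i else 0

lemma blockMask_apply (j : Fin m) (z : Euc d) (i : Fin d) :
    blockMask blk j z i = if blk i = j then z i else 0 := rfl

lemma tailMask_apply (t : ℕ) (z : Euc d) (i : Fin d) :
    tailMask blk t z i = if t ≤ (blk i : ℕ) + 1 then z i else 0 := rfl

lemma blockCombine_apply (t : ℕ) (x y : Euc d) (i : Fin d) :
    blockCombine blk t x y i = if (blk i : ℕ) + 1 ≤ t then x i else y i := rfl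

lemma blockMask_sub (j : Fin m) (a b : Euc d) :
    blockMask blk j (a - b) = blockMask blk j a - blockMask blk j b := by
  ext i; simp only [blockMask_apply, PiLp.sub_apply]; split_ifs <;> simp

lemma blockMask_blockMask (j : Fin m) (z : Euc d) :
    blockMask blk j (blockMask blk j z) = blockMask blk j z := by
  ext i; simp only [blockMask_apply]; split_ifs <;> rfl

lemma inner_blockMask_left (j : Fin m) (x y : Euc d) :
    ⟪blockMask blk j x, y⟫ = ⟪x, blockMask blk j y⟫ := by
  simp only [PiLp.inner_apply, blockMask_apply]
  refine Finset.sum_congr rfl fun i _ => ?_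
  split_ifs <;> simp

lemma sum_blockMask (z : Euc d) : ∑ j, blockMask blk j z = z := by
  ext i
  simp [WithLp.ofLp_sum, blockMask_apply]

lemma sum_norm_blockMask_sq (z : Euc d) : ∑ j, ‖blockMask blk j z‖ ^ 2 = ‖z‖ ^ 2 := by
  simp only [EuclideanSpace.real_norm_sq_eq, blockMask_apply]
  rw [Finset.sum_comm]
  refine Finset.sum_congr rfl fun i _ => ?_
  simp [ite_pow]

lemma tailMask_one (z : Euc d) : tailMask blk 1 z = z := by
  ext i; simp [tailMask_apply]

lemma tailMask_succ_last (z : Euc d) : tailMask blk (m + 1) z = 0 := by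
  ext i
  rw [tailMask_apply, if_neg (by omega)]
  rfl

lemma tailMask_eq_add_blockMask (j : Fin m) (z : Euc d) :
    tailMask blk (j + 1) z = tailMask blk (j + 2) z + blockMask blk j z := by
  ext i
  simp only [tailMask_apply, PiLp.add_apply, blockMask_apply, Fin.ext_iff]
  split_ifs <;> first | omega | ring

lemma sub_blockCombine (j : Fin m) (x y : Euc d) :
    x - blockCombine blk (j + 1) x y = tailMask blk (j + 2) (x - y) := by
  ext i
  simp only [blockCombine_apply, tailMask_apply, PiLp.sub_apply]
  split_ifs <;> first | omega | ring

lemma quadForm_eq_inner (Q : Matrix (Fin d) (Fin d) ℝ) (z : Euc d) :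
    quadForm Q z = ⟪Matrix.toEuclideanLin Q z, z⟫ := by
  simp only [quadForm, PiLp.inner_apply, Matrix.toLpLin_apply, Matrix.mulVec, dotProduct,
    RCLike.inner_apply, conj_trivial, Finset.mul_sum]
  refine Finset.sum_congr rfl fun i _ => Finset.sum_congr rfl fun i' _ => ?_
  ring

lemma quadForm_add (Q Q' : Matrix (Fin d) (Fin d) ℝ) (z : Euc d) :
    quadForm (Q + Q') z = quadForm Q z + quadForm Q' z := by
  simp only [quadForm_eq_inner, map_add, LinearMap.add_apply, inner_add_left]

lemma quadForm_sum {ι : Type*} (s : Finset ι) (Q : ι → Matrix (Fin d) (Fin d) ℝ) (z : Euc d) :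
    quadForm (∑ j ∈ s, Q j) z = ∑ j ∈ s, quadForm (Q j) z := by
  simp only [quadForm_eq_inner, map_sum, LinearMap.sum_apply, sum_inner]

lemma quadForm_keepGE (t : ℕ) (Q : Matrix (Fin d) (Fin d) ℝ) (z : Euc d) :
    quadForm (keepGE blk t Q) z = quadForm Q (tailMask blk t z) := by
  refine Finset.sum_congr rfl fun i _ => Finset.sum_congr rfl fun i' _ => ?_
  simp only [keepGE, Matrix.of_apply, tailMask_apply]
  split_ifs <;> simp_all

lemma quadForm_le_specNorm (Q : Matrix (Fin d) (Fin d) ℝ) (z : Euc d) :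
    quadForm Q z ≤ specNorm Q * ‖z‖ ^ 2 := by
  rw [quadForm_eq_inner, specNorm, sq, ← mul_assoc,
    ← Matrix.coe_toEuclideanCLM_eq_toEuclideanLin]
  exact (real_inner_le_norm _ _).trans <| mul_le_mul_of_nonneg_right
    ((Matrix.toEuclideanCLM (𝕜 := ℝ) Q).le_opNorm z) (norm_nonneg z)

open scoped MatrixOrder in
lemma Matrix.PosSemidef.exists_quadForm_eq_norm_sq {Q : Matrix (Fin d) (Fin d) ℝ}
    (hQ : Q.PosSemidef) : ∃ S : Euc d →ₗ[ℝ] Euc d, ∀ z, quadForm Q z = ‖S z‖ ^ 2 := by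
  have hS : (CFC.sqrt Q).IsHermitian :=
    (Matrix.nonneg_iff_posSemidef.mp (CFC.sqrt_nonneg Q)).isHermitian
  refine ⟨Matrix.toEuclideanLin (CFC.sqrt Q), fun z => ?_⟩
  conv_lhs => rw [quadForm_eq_inner, ← CFC.sqrt_mul_sqrt_self Q hQ.nonneg]
  rw [Matrix.toLpLin_mul_same, LinearMap.comp_apply,
    Matrix.isSymmetric_toEuclideanLin_iff.mpr hS, real_inner_self_eq_norm_sq]

section Calculus
variable {E : Type*} [NormedAddCommGroup E] [InnerProductSpace ℝ E] [CompleteSpace E]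
  {f : E → ℝ}

lemma hasDerivAt_comp_add_smul {x w : E} {t : ℝ} (hf : DifferentiableAt ℝ f (x + t • w)) :
    HasDerivAt (fun s : ℝ => f (x + s • w)) ⟪gradient f (x + t • w), w⟫ t := by
  have hline : HasDerivAt (fun s : ℝ => x + s • w) w t := by
    simpa using ((hasDerivAt_id t).smul_const w).const_add x
  exact hf.hasGradientAt.hasFDerivAt.comp_hasDerivAt t hline

lemma ConvexOn.add_inner_gradient_sub_le (hconv : ConvexOn ℝ univ f) {x : E}
    (hf : DifferentiableAt ℝ f x) (z : E) : f x + ⟪gradient f x, z - x⟫ ≤ f z := by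
  have hline : f ∘ AffineMap.lineMap x z = fun s : ℝ => f (x + s • (z - x)) := by
    funext s; simp [AffineMap.lineMap_apply_module', add_comm]
  have hφ := hconv.comp_affineMap (AffineMap.lineMap x z)
  rw [preimage_univ, hline] at hφ
  have hd : HasDerivAt (fun s : ℝ => f (x + s • (z - x))) ⟪gradient f x, z - x⟫ 0 := by
    simpa using hasDerivAt_comp_add_smul (x := x) (w := z - x) (t := 0) (by simpa using hf)
  have := hφ.le_slope_of_hasDerivAt (mem_univ 0) (mem_univ 1) zero_lt_one hd
  simp only [slope_def_field, zero_smul, add_zero, one_smul, add_sub_cancel, sub_zero,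
    div_one] at this
  linarith

lemma le_add_inner_gradient_add_of_inner_gradient_sub_le (hf : Differentiable ℝ f) (c w x : E)
    (B A : ℝ)
    (h : ∀ s ∈ Icc (0 : ℝ) 1, ⟪gradient f (c + s • w) - gradient f x, w⟫ ≤ (1 - s) * B + s * A) :
    f (c + w) ≤ f c + ⟪gradient f x, w⟫ + (B + A) / 2 := by
  -- `f` along the segment minus an antiderivative of the bound is antitone on `[0, 1]`.
  set φ : ℝ → ℝ :=
    fun s => f (c + s • w) - s * ⟪gradient f x, w⟫ - (s * B + s ^ 2 / 2 * (A - B))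
  have hφ' (s : ℝ) : HasDerivAt φ (⟪gradient f (c + s • w), w⟫ - ⟪gradient f x, w⟫
      - (B + s * (A - B))) s := by
    have := ((hasDerivAt_comp_add_smul (x := c) (w := w) (hf _)).sub
      ((hasDerivAt_id s).mul_const ⟪gradient f x, w⟫)).sub
      (((hasDerivAt_id s).mul_const B).add (((hasDerivAt_pow 2 s).div_const 2).mul_const (A - B)))
    exact this.congr_deriv (by ring)
  have hanti : AntitoneOn φ (Icc 0 1) := by
    refine antitoneOn_of_hasDerivWithinAt_nonpos (convex_Icc 0 1)
      (fun s _ => (hφ' s).continuousAt.continuousWithinAt)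
      (fun s _ => (hφ' s).hasDerivWithinAt) fun s hs => ?_
    have := h s (interior_subset hs)
    rw [inner_sub_left] at this
    linarith
  have := hanti (left_mem_Icc.mpr zero_le_one) (right_mem_Icc.mpr zero_le_one) zero_le_one
  simp only [φ, zero_smul, add_zero, one_smul, zero_mul, one_mul, sub_zero, one_pow,
    ne_eq, OfNat.ofNat_ne_zero, not_false_eq_true, zero_pow, zero_div] at this
  linarith

end Calculus

lemma Matrix.PosSemidef.quadForm_nonneg {Q : Matrix (Fin d) (Fin d) ℝ} (hQ : Q.PosSemidef)
    (z : Euc d) : 0 ≤ quadForm Q z := by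
  obtain ⟨S, hS⟩ := hQ.exists_quadForm_eq_norm_sq
  rw [hS]; positivity

lemma quadForm_Qtilde (Q : Fin m → Matrix (Fin d) (Fin d) ℝ) (z : Euc d) :
    quadForm (Qtilde blk Q) z = ∑ j : Fin m,
      (quadForm (Q j) (tailMask blk (j + 1) z) + quadForm (Q j) (tailMask blk (j + 2) z)) := by
  simp only [Qtilde, quadForm_sum, quadForm_add, quadForm_keepGE]

lemma bigL_nonneg (Q : Fin m → Matrix (Fin d) (Fin d) ℝ) : 0 ≤ bigL blk Q :=
  Real.sqrt_nonneg _

lemma two_mul_quadForm_Qtilde_le (Q : Fin m → Matrix (Fin d) (Fin d) ℝ) (z : Euc d) :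
    2 * quadForm (Qtilde blk Q) z ≤ (bigL blk Q * ‖z‖) ^ 2 := by
  have : 0 ≤ specNorm (Qtilde blk Q) := norm_nonneg _
  rw [mul_pow, bigL, Real.sq_sqrt (by positivity), mul_assoc]
  exact mul_le_mul_of_nonneg_left (quadForm_le_specNorm _ _) zero_le_two

section BlockSmooth
variable {f : Euc d → ℝ} {Q : Fin m → Matrix (Fin d) (Fin d) ℝ}

lemma BlockLip.norm_blockMask_gradient_sub_le (hflip : BlockLip blk f Q) {j : Fin m}
    {S : Euc d →ₗ[ℝ] Euc d} (hS : ∀ z, quadForm (Q j) z = ‖S z‖ ^ 2) (a b : Euc d) :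
    ‖blockMask blk j (gradient f a) - blockMask blk j (gradient f b)‖ ≤ ‖S (a - b)‖ :=
  (pow_le_pow_iff_left₀ (norm_nonneg _) (norm_nonneg _) two_ne_zero).mp
    (hS (a - b) ▸ hflip j a b)

lemma BlockLip.le_add_inner_gradient_add_of_blockMask_eq (hf : Differentiable ℝ f)
    (hflip : BlockLip blk f Q) {j : Fin m} {S : Euc d →ₗ[ℝ] Euc d}
    (hS : ∀ z, quadForm (Q j) z = ‖S z‖ ^ 2) {w : Euc d} (hw : blockMask blk j w = w)
    (c x : Euc d) :
    f (c + w) ≤ f c + ⟪gradient f x, w⟫ + (‖S (c - x)‖ + ‖S (c - x + w)‖) / 2 * ‖w‖ := by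
  have key := le_add_inner_gradient_add_of_inner_gradient_sub_le hf c w x
    (‖S (c - x)‖ * ‖w‖) (‖S (c - x + w)‖ * ‖w‖) fun s ⟨hs0, hs1⟩ => ?_
  · linarith
  have hseg : S (c + s • w - x) = (1 - s) • S (c - x) + s • S (c - x + w) := by
    rw [← map_smul, ← map_smul, ← map_add]; congr 1; module
  calc ⟪gradient f (c + s • w) - gradient f x, w⟫
      = ⟪blockMask blk j (gradient f (c + s • w)) - blockMask blk j (gradient f x), w⟫ := by
        rw [← blockMask_sub, inner_blockMask_left, hw]
    _ ≤ ‖S (c + s • w - x)‖ * ‖w‖ := (real_inner_le_norm _ _).trans <|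
        mul_le_mul_of_nonneg_right (hflip.norm_blockMask_gradient_sub_le hS _ _) (norm_nonneg _)
    _ ≤ ((1 - s) * ‖S (c - x)‖ + s * ‖S (c - x + w)‖) * ‖w‖ := by
        gcongr
        rw [hseg]
        refine (norm_add_le _ _).trans_eq ?_
        rw [norm_smul, norm_smul, Real.norm_of_nonneg (by linarith), Real.norm_of_nonneg hs0]
    _ = (1 - s) * (‖S (c - x)‖ * ‖w‖) + s * (‖S (c - x + w)‖ * ‖w‖) := by ring

lemma sum_mul_norm_blockMask_le {S : Fin m → Euc d →ₗ[ℝ] Euc d}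
    (hS : ∀ j z, quadForm (Q j) z = ‖S j z‖ ^ 2) (u : Euc d) :
    ∑ j, (‖S j (tailMask blk (j + 2) u)‖ + ‖S j (tailMask blk (j + 1) u)‖) * ‖blockMask blk j u‖
      ≤ bigL blk Q * ‖u‖ ^ 2 := by
  have hsq :
      ∑ j : Fin m, (‖S j (tailMask blk (j + 2) u)‖ + ‖S j (tailMask blk (j + 1) u)‖) ^ 2
        ≤ (bigL blk Q * ‖u‖) ^ 2 := by
    refine le_trans ?_ (two_mul_quadForm_Qtilde_le Q u)
    rw [quadForm_Qtilde, Finset.mul_sum]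
    refine Finset.sum_le_sum fun j _ => ?_
    rw [hS, hS]
    nlinarith [sq_nonneg (‖S j (tailMask blk (j + 2) u)‖ - ‖S j (tailMask blk (j + 1) u)‖)]
  calc _ ≤ √(∑ j : Fin m, (‖S j (tailMask blk (j + 2) u)‖ + ‖S j (tailMask blk (j + 1) u)‖) ^ 2)
          * √(∑ j, ‖blockMask blk j u‖ ^ 2) := Real.sum_mul_le_sqrt_mul_sqrt _ _ _
    _ ≤ (bigL blk Q * ‖u‖) * ‖u‖ := by
        rw [sum_norm_blockMask_sq, Real.sqrt_sq (norm_nonneg u)]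
        gcongr
        exact (Real.sqrt_le_left (mul_nonneg (bigL_nonneg Q) (norm_nonneg u))).mpr hsq
    _ = bigL blk Q * ‖u‖ ^ 2 := by ring

-- Move from `x` to `x + u` one block at a time, last block first; Cauchy–Schwarz collects the
-- block errors into `‖Q̃‖`.
lemma BlockLip.le_add_inner_gradient_add_bigL (hpsd : ∀ j, (Q j).PosSemidef)
    (hf : Differentiable ℝ f) (hflip : BlockLip blk f Q) (x u : Euc d) :
    f (x + u) ≤ f x + ⟪gradient f x, u⟫ + bigL blk Q / 2 * ‖u‖ ^ 2 := by
  choose S hS using fun j => (hpsd j).exists_quadForm_eq_norm_sq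
  set F : ℕ → ℝ := fun t => f (x + tailMask blk t u)
  have hblock (j : Fin m) : F (j + 1) - F (j + 2) - ⟪gradient f x, blockMask blk j u⟫
      ≤ (‖S j (tailMask blk (j + 2) u)‖ + ‖S j (tailMask blk (j + 1) u)‖)
        * ‖blockMask blk j u‖ / 2 := by
    have := hflip.le_add_inner_gradient_add_of_blockMask_eq hf (hS j)
      (blockMask_blockMask j u) (x + tailMask blk (j + 2) u) x
    rw [add_sub_cancel_left, add_assoc, ← tailMask_eq_add_blockMask] at this
    linarith
  have htel : f (x + u) - f x = ∑ j : Fin m, (F (j + 1) - F (j + 2)) := by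
    rw [Fin.sum_univ_eq_sum_range (fun i => F (i + 1) - F (i + 2)),
      Finset.sum_range_sub' (fun i => F (i + 1))]
    simp only [F, zero_add, tailMask_one, tailMask_succ_last, add_zero]
  have hinner : ⟪gradient f x, u⟫ = ∑ j, ⟪gradient f x, blockMask blk j u⟫ := by
    rw [← inner_sum, sum_blockMask]
  have : f (x + u) - f x - ⟪gradient f x, u⟫ ≤ bigL blk Q * ‖u‖ ^ 2 / 2 :=
    calc f (x + u) - f x - ⟪gradient f x, u⟫
        = ∑ j : Fin m, (F (j + 1) - F (j + 2) - ⟪gradient f x, blockMask blk j u⟫) := by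
          rw [htel, hinner, ← Finset.sum_sub_distrib]
      _ ≤ ∑ j, (‖S j (tailMask blk (j + 2) u)‖ + ‖S j (tailMask blk (j + 1) u)‖)
            * ‖blockMask blk j u‖ / 2 := Finset.sum_le_sum fun j _ => hblock j
      _ ≤ bigL blk Q * ‖u‖ ^ 2 / 2 := by
          rw [← Finset.sum_div]
          gcongr
          exact sum_mul_norm_blockMask_le hS u
  linarith

lemma BlockLip.two_mul_norm_gradient_sub_sq_le (hpsd : ∀ j, (Q j).PosSemidef)
    (hflip : BlockLip blk f Q) {x y p : Euc d}
    (hp : ∀ j, blockMask blk j p = blockMask blk j (gradient f (blockCombine blk (j + 1) x y))) :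
    2 * ‖gradient f x - p‖ ^ 2 ≤ (bigL blk Q * ‖x - y‖) ^ 2 := by
  refine le_trans ?_ (two_mul_quadForm_Qtilde_le Q (x - y))
  rw [← sum_norm_blockMask_sq, quadForm_Qtilde]
  gcongr with j
  have hlip := hflip j x (blockCombine blk (j + 1) x y)
  rw [sub_blockCombine] at hlip
  rw [blockMask_sub, hp j]
  linarith [(hpsd j).quadForm_nonneg (tailMask blk (j + 1) (x - y))]

end BlockSmooth

lemma mul_le_sq_add_sq_of_sq_le {C C' E a b : ℝ} (hC' : 0 < C') (hC : C' ≤ C)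
    (hE : E ^ 2 ≤ 2 / 25 * C' ^ 2 * a ^ 2) : E * b ≤ C / 5 * b ^ 2 + C' / 10 * a ^ 2 := by
  have h : 0 ≤ (C / 5 * b ^ 2 + C' / 10 * a ^ 2 - E * b) * (20 * C') := by
    nlinarith [sq_nonneg (5 * E - 2 * C' * b),
      mul_nonneg (sub_nonneg.2 hC) (mul_nonneg hC'.le (sq_nonneg b))]
  nlinarith

namespace ACoder
variable {f g : Euc d → ℝ} {gj : Fin m → Euc d → ℝ} {Q : Fin m → Matrix (Fin d) (Fin d) ℝ}
  {γ : ℝ} (P : ACoder d m blk f g gj Q γ)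

lemma A_nonneg (n : ℕ) : 0 ≤ P.A n := by
  induction n with
  | zero => exact P.hA0.ge
  | succ n ih =>
    rw [P.hA (n + 1) n.succ_pos, Nat.add_sub_cancel]
    linarith [P.hapos (n + 1) n.succ_pos]

lemma A_pos {n : ℕ} (hn : 1 ≤ n) : 0 < P.A n := by
  rw [P.hA n hn]
  linarith [P.A_nonneg (n - 1), P.hapos n hn]

lemma A_pred_le (n : ℕ) : P.A (n - 1) ≤ P.A n := by
  rcases Nat.eq_zero_or_pos n with rfl | hn
  · rfl
  · rw [P.hA n hn]
    linarith [P.hapos n hn]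

lemma one_le_one_add_A_mul (n : ℕ) : 1 ≤ 1 + P.A n * γ := by
  linarith [mul_nonneg (P.A_nonneg n) P.hγ]

lemma y_sub_x {k : ℕ} (hk : 1 ≤ k) :
    P.y k - P.x k = (P.a k / P.A k) • (P.v k - P.v (k - 1)) := by
  rw [P.hy k hk, P.hx k hk]
  module

lemma A_pred_smul_x_sub_y {k : ℕ} (hk : 1 ≤ k) :
    P.A (k - 1) • (P.x k - P.y (k - 1)) = P.a k • (P.v (k - 1) - P.x k) := by
  have hA : P.A k ≠ 0 := (P.A_pos hk).ne'
  have hx : P.A k • P.x k = P.A (k - 1) • P.y (k - 1) + P.a k • P.v (k - 1) := by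
    rw [P.hx k hk, smul_add, smul_smul, smul_smul, mul_div_cancel₀ _ hA, mul_div_cancel₀ _ hA]
  rw [P.hA k hk] at hx
  linear_combination (norm := module) hx

lemma a_mul_inner_q {k : ℕ} (hk : 1 ≤ k) (w : Euc d) :
    P.a k * ⟪P.q k, w⟫ = P.a k * ⟪P.p k, w⟫
      + P.a (k - 1) * ⟪gradient f (P.x (k - 1)) - P.p (k - 1), w⟫ := by
  rw [P.hq k hk, inner_add_left, real_inner_smul_left, mul_add, ← mul_assoc,
    mul_div_cancel₀ _ (P.hapos k hk).ne']

lemma A_pred_mul_sub_le {k : ℕ} (hk : 1 ≤ k) :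
    P.A (k - 1) * (f (P.x k) - f (P.y (k - 1)))
      ≤ P.a k * ⟪gradient f (P.x k), P.v (k - 1) - P.x k⟫ := by
  have hconv := P.hfconv.add_inner_gradient_sub_le (P.hfdiff (P.x k)) (P.y (k - 1))
  calc P.A (k - 1) * (f (P.x k) - f (P.y (k - 1)))
      ≤ P.A (k - 1) * ⟪gradient f (P.x k), P.x k - P.y (k - 1)⟫ := by
        refine mul_le_mul_of_nonneg_left ?_ (P.A_nonneg _)
        rw [← neg_sub (P.y (k - 1)), inner_neg_right]
        linarith
    _ = P.a k * ⟪gradient f (P.x k), P.v (k - 1) - P.x k⟫ := by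
        rw [← real_inner_smul_right, ← real_inner_smul_right, P.A_pred_smul_x_sub_y hk]

lemma A_mul_sub_le {k : ℕ} (hk : 1 ≤ k) :
    P.A k * (f (P.y k) - f (P.x k))
      ≤ P.a k * ⟪gradient f (P.x k), P.v k - P.v (k - 1)⟫
        + (1 + P.A (k - 1) * γ) / 5 * ‖P.v k - P.v (k - 1)‖ ^ 2 := by
  have hA := P.A_pos hk
  have hL := P.hLpos
  have hdesc := P.hflip.le_add_inner_gradient_add_bigL P.hpsd P.hfdiff (P.x k) (P.y k - P.x k)
  rw [add_sub_cancel, P.y_sub_x hk, real_inner_smul_right, norm_smul, Real.norm_of_nonneg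
    (div_nonneg (P.hapos k hk).le hA.le)] at hdesc
  have hstep : bigL blk Q / 2 * (P.a k ^ 2 / P.A k) ≤ (1 + P.A (k - 1) * γ) / 5 := by
    have := mul_le_mul_of_nonneg_left (P.hstep k hk) (by positivity : 0 ≤ bigL blk Q / 2)
    rwa [show bigL blk Q / 2 * (2 * (1 + P.A (k - 1) * γ) / (5 * bigL blk Q))
      = (1 + P.A (k - 1) * γ) / 5 by field_simp] at this
  have hmul := mul_le_mul_of_nonneg_left hdesc hA.le
  have e1 : P.A k * (P.a k / P.A k * ⟪gradient f (P.x k), P.v k - P.v (k - 1)⟫)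
      = P.a k * ⟪gradient f (P.x k), P.v k - P.v (k - 1)⟫ := by field_simp
  have e2 : P.A k * (bigL blk Q / 2 * (P.a k / P.A k * ‖P.v k - P.v (k - 1)‖) ^ 2)
      = bigL blk Q / 2 * (P.a k ^ 2 / P.A k) * ‖P.v k - P.v (k - 1)‖ ^ 2 := by field_simp
  rw [mul_add, mul_add, e1, e2] at hmul
  nlinarith [sq_nonneg ‖P.v k - P.v (k - 1)‖]

lemma sq_a_mul_norm_gradient_sub_le {n : ℕ} (hn : 1 ≤ n) :
    (P.a n * ‖gradient f (P.x n) - P.p n‖) ^ 2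
      ≤ 2 / 25 * (1 + P.A (n - 1) * γ) ^ 2 * ‖P.v n - P.v (n - 1)‖ ^ 2 := by
  have hA := P.A_pos hn
  have hL := P.hLpos
  have hLr : bigL blk Q * (P.a n ^ 2 / P.A n) ≤ 2 * (1 + P.A (n - 1) * γ) / 5 := by
    have := mul_le_mul_of_nonneg_left (P.hstep n hn) hL.le
    rwa [show bigL blk Q * (2 * (1 + P.A (n - 1) * γ) / (5 * bigL blk Q))
      = 2 * (1 + P.A (n - 1) * γ) / 5 by field_simp] at this
  have herr := P.hflip.two_mul_norm_gradient_sub_sq_le P.hpsd (P.hp n hn)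
  rw [norm_sub_rev (P.x n), P.y_sub_x hn, norm_smul,
    Real.norm_of_nonneg (div_nonneg (P.hapos n hn).le hA.le)] at herr
  calc (P.a n * ‖gradient f (P.x n) - P.p n‖) ^ 2
      = P.a n ^ 2 * (2 * ‖gradient f (P.x n) - P.p n‖ ^ 2) / 2 := by ring
    _ ≤ P.a n ^ 2 * (bigL blk Q * (P.a n / P.A n * ‖P.v n - P.v (n - 1)‖)) ^ 2 / 2 := by gcongr
    _ = (bigL blk Q * (P.a n ^ 2 / P.A n)) ^ 2 * ‖P.v n - P.v (n - 1)‖ ^ 2 / 2 := by ring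
    _ ≤ (2 * (1 + P.A (n - 1) * γ) / 5) ^ 2 * ‖P.v n - P.v (n - 1)‖ ^ 2 / 2 := by
        gcongr
    _ = 2 / 25 * (1 + P.A (n - 1) * γ) ^ 2 * ‖P.v n - P.v (n - 1)‖ ^ 2 := by ring

lemma neg_a_pred_mul_inner_le {k : ℕ} (hk : 1 ≤ k) :
    -(P.a (k - 1) * ⟪gradient f (P.x (k - 1)) - P.p (k - 1), P.v k - P.v (k - 1)⟫)
      ≤ (1 + P.A (k - 1) * γ) / 5 * ‖P.v k - P.v (k - 1)‖ ^ 2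
        + (1 + P.A (k - 2) * γ) / 10 * ‖P.v (k - 1) - P.v (k - 2)‖ ^ 2 := by
  have hC := P.one_le_one_add_A_mul (k - 1)
  have hC' := P.one_le_one_add_A_mul (k - 2)
  rcases Nat.lt_or_ge k 2 with hk1 | hk2
  · rw [show P.a (k - 1) = 0 by rw [show k - 1 = 0 by omega, P.ha0], zero_mul, neg_zero]
    have := mul_nonneg (zero_le_one.trans hC) (sq_nonneg ‖P.v k - P.v (k - 1)‖)
    have := mul_nonneg (zero_le_one.trans hC') (sq_nonneg ‖P.v (k - 1) - P.v (k - 2)‖)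
    linarith
  have hn : 1 ≤ k - 1 := by omega
  rw [show k - 2 = k - 1 - 1 by omega] at hC' ⊢
  have hmono : 1 + P.A (k - 1 - 1) * γ ≤ 1 + P.A (k - 1) * γ := by
    linarith [mul_le_mul_of_nonneg_right (P.A_pred_le (k - 1)) P.hγ]
  set e := gradient f (P.x (k - 1)) - P.p (k - 1)
  have hinner : -(P.a (k - 1) * ⟪e, P.v k - P.v (k - 1)⟫)
      ≤ P.a (k - 1) * ‖e‖ * ‖P.v k - P.v (k - 1)‖ := by
    rw [← mul_neg, ← inner_neg_right, mul_assoc, ← norm_neg (P.v k - P.v (k - 1))]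
    exact mul_le_mul_of_nonneg_left (real_inner_le_norm _ _) (P.hapos _ hn).le
  exact hinner.trans (mul_le_sq_add_sq_of_sq_le (by linarith) hmono
    (P.sq_a_mul_norm_gradient_sub_le hn))

end ACoder

theorem stmt6 {d m : ℕ} {blk : Fin d → Fin m} {f g : Euc d → ℝ}
    {gj : Fin m → Euc d → ℝ} {Q : Fin m → Matrix (Fin d) (Fin d) ℝ} {γ : ℝ}
    (P : ACoder d m blk f g gj Q γ) :
    ∀ (u : Euc d) (k : ℕ), 1 ≤ k →
      P.A k * (f (P.y k) - f (P.x k)) - P.A (k - 1) * (f (P.y (k - 1)) - f (P.x k))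
          - P.a k * ⟪P.q k, P.v k - P.x k⟫
          + P.a k * ⟪gradient f (P.x k) - P.q k, P.x k - u⟫
          - (1 + P.A (k - 1) * γ) / 2 * ‖P.v k - P.v (k - 1)‖ ^ 2 ≤
        P.a k * ⟪gradient f (P.x k) - P.p k, P.v k - u⟫
          - P.a (k - 1) * ⟪gradient f (P.x (k - 1)) - P.p (k - 1), P.v (k - 1) - u⟫
          - (1 + P.A (k - 1) * γ) / 10 * ‖P.v k - P.v (k - 1)‖ ^ 2
          + (1 + P.A (k - 2) * γ) / 10 * ‖P.v (k - 1) - P.v (k - 2)‖ ^ 2 := by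
  intro u k hk
  have hconv := P.A_pred_mul_sub_le hk
  have hsmooth := P.A_mul_sub_le hk
  have herr := P.neg_a_pred_mul_inner_le hk
  have hq₁ := P.a_mul_inner_q hk (P.v k - P.x k)
  have hq₂ := P.a_mul_inner_q hk (P.x k - u)
  simp only [inner_sub_left, inner_sub_right] at *
  linarith
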